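/- Suppose s ≥ 1, or suppose s > 0 and the network is complete (c_{i,j} > 0 for all i ≠ j). Let V : [0,∞) → ℝ^N be a solution of the volume-scavenging system with V_j(0) ≥ 0 for all 1 ≤ j ≤ N and (1/N) Σ_{j=1}^N V_j(0) = V̄ > 0. Then V_j(t) ≥ 0 for all t ≥ 0 and all 1 ≤ j ≤ N. -/

import Mathlib

/-- Droplet volume as a function of height: v(h) = h(h²+3)/4. -/
noncomputable def vol (h : ℝ) : ℝ := h * (h ^ 2 + 3) / 4

/-- Droplet pressure as a function of height: p(h) = 4h/(h²+1). -/
noncomputable def pres (h : ℝ) : ℝ := 4 * h / (h ^ 2 + 1)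

/-- Pressure as a function of volume: P(V) = p(h) where v(h) = V
(v is a strictly increasing bijection of ℝ, so its inverse is well defined). -/
noncomputable def Pfun (V : ℝ) : ℝ := pres (Function.invFun vol V)

/-- Δ_s(x) = |x|^s sgn(x). -/
noncomputable def Ds (s x : ℝ) : ℝ := |x| ^ s * Real.sign x

/-!
Nonnegativity propagates by continuous induction in time: the set of times at which `V ≥ 0` is
closed, so it suffices that from a nonnegative state `V` stays nonnegative for a short while.

For `s ≥ 1`, near a nonnegative state the negative parts `u_j = (V_j)⁻` satisfy the one-sided
estimate `D⁺ ∑ u_j ≤ K ∑ u_j`: a droplet with `V_j ≤ 0` has `P_j ≤ 0`, so it only loses volume to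
droplets with `P_i < P_j`, hence `V_i < 0`, at rate at most `(6 u_i)^s ≤ 6 u_i`. Grönwall's
inequality keeps `∑ u_j = 0`.

On a complete network the total volume is conserved and positive, so some droplet has positive
volume, and it feeds every empty droplet at a positive rate.
-/

open Set Filter Topology

lemma vol_strictMono : StrictMono vol := by
  intro x y hxy
  have h : vol y - vol x = (y - x) * ((x + y / 2) ^ 2 + 3 * y ^ 2 / 4 + 3) / 4 := by
    simp only [vol]; ring
  nlinarith [sq_nonneg (x + y / 2), sq_nonneg y]

lemma vol_surjective : Function.Surjective vol := by
  intro y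
  have hlow : vol (-(2 * |y| + 2)) ≤ y := by
    simp only [vol]; nlinarith [abs_nonneg y, neg_abs_le y, sq_nonneg (2 * |y| + 2)]
  have hhigh : y ≤ vol (2 * |y| + 2) := by
    simp only [vol]; nlinarith [abs_nonneg y, le_abs_self y, sq_nonneg (2 * |y| + 2)]
  exact intermediate_value_univ _ _ (by unfold vol; fun_prop) ⟨hlow, hhigh⟩

lemma vol_zero : vol 0 = 0 := by simp [vol]

lemma vol_invFun_vol (a : ℝ) : vol (Function.invFun vol a) = a :=
  Function.invFun_eq (vol_surjective a)

lemma invFun_vol_pos_iff {a : ℝ} : 0 < Function.invFun vol a ↔ 0 < a := by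
  simpa only [vol_zero, vol_invFun_vol] using
    (vol_strictMono.lt_iff_lt (a := 0) (b := Function.invFun vol a)).symm

lemma Pfun_zero : Pfun 0 = 0 := by
  have h : Function.invFun vol 0 = 0 := vol_strictMono.injective (by rw [vol_invFun_vol, vol_zero])
  simp [Pfun, pres, h]

lemma Pfun_pos {a : ℝ} (ha : 0 < a) : 0 < Pfun a := by
  have h := invFun_vol_pos_iff.2 ha
  unfold Pfun pres
  positivity

lemma Pfun_nonneg {a : ℝ} (ha : 0 ≤ a) : 0 ≤ Pfun a := by
  rcases ha.eq_or_lt with rfl | ha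
  · exact Pfun_zero.ge
  · exact (Pfun_pos ha).le

lemma Pfun_nonpos {a : ℝ} (ha : a ≤ 0) : Pfun a ≤ 0 := by
  have h : Function.invFun vol a ≤ 0 := not_lt.1 (invFun_vol_pos_iff.not.2 ha.not_gt)
  unfold Pfun pres
  exact div_nonpos_of_nonpos_of_nonneg (by linarith) (by positivity)

-- |p(h)| ≤ 4|h| and |v(h)| ≥ 3|h|/4, so any constant ≥ 16/3 works.
lemma neg_pres_le (h : ℝ) : -pres h ≤ 6 * (vol h)⁻ := by
  rcases le_or_gt 0 h with hh | hh
  · have : 0 ≤ pres h := by unfold pres; positivity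
    linarith [negPart_nonneg (vol h)]
  · have hpres : -pres h ≤ -4 * h := by
      rw [pres, ← neg_div, ← neg_mul]
      exact div_le_self (by linarith) (by nlinarith [sq_nonneg h])
    have hvol : -4 * h ≤ 6 * -vol h := by
      simp only [vol]; nlinarith [mul_nonneg (neg_nonneg.2 hh.le) (sq_nonneg h)]
    linarith [neg_le_negPart (vol h)]

lemma neg_Pfun_le (a : ℝ) : -Pfun a ≤ 6 * a⁻ := by
  have h := neg_pres_le (Function.invFun vol a)
  rwa [vol_invFun_vol] at h

lemma Ds_neg (s x : ℝ) : Ds s (-x) = -Ds s x := by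
  rw [Ds, Ds, abs_neg, Real.sign_neg, mul_neg]

lemma Ds_pos {s x : ℝ} (hx : 0 < x) : 0 < Ds s x := by
  rw [Ds, Real.sign_of_pos hx, mul_one]
  exact Real.rpow_pos_of_pos (abs_pos.2 hx.ne') s

lemma Ds_nonneg {s x : ℝ} (hx : 0 ≤ x) : 0 ≤ Ds s x := by
  rcases hx.eq_or_lt with rfl | hx
  · simp [Ds]
  · exact (Ds_pos hx).le

lemma neg_Ds_le_negPart {s x : ℝ} (hs : 1 ≤ s) (hx : x⁻ ≤ 1) : -Ds s x ≤ x⁻ := by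
  rcases le_or_gt 0 x with h | h
  · linarith [Ds_nonneg (s := s) h, negPart_nonneg x]
  · rw [Ds, Real.sign_of_neg h, abs_of_neg h, ← negPart_of_nonpos h.le, mul_neg_one, neg_neg]
    exact Real.rpow_le_self_of_le_one (negPart_nonneg x) hx hs

section Inflow

variable {ι : Type*} [Fintype ι] {s : ℝ} {c : ι → ι → ℝ}

noncomputable def inflow (s : ℝ) (c : ι → ι → ℝ) (v : ι → ℝ) (j : ι) : ℝ :=
  ∑ i, c i j * Ds s (Pfun (v i) - Pfun (v j))

lemma sum_inflow_eq_zero (hc : ∀ i j, c i j = c j i) (v : ι → ℝ) : ∑ j, inflow s c v j = 0 := by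
  have h : ∑ j, inflow s c v j = -∑ j, inflow s c v j := by
    simp only [inflow]
    conv_lhs => rw [Finset.sum_comm]
    rw [← Finset.sum_neg_distrib]
    refine Finset.sum_congr rfl fun i _ => ?_
    rw [← Finset.sum_neg_distrib]
    refine Finset.sum_congr rfl fun j _ => ?_
    rw [hc, ← neg_sub, Ds_neg, mul_neg]
  linarith

lemma neg_inflow_le (hs : 1 ≤ s) (hc : ∀ i j, 0 ≤ c i j) {v : ι → ℝ} (hv : ∀ i, -1 ≤ 6 * v i)
    {j : ι} (hj : v j ≤ 0) : -inflow s c v j ≤ 6 * ∑ i, c i j * (v i)⁻ := by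
  rw [inflow, ← Finset.sum_neg_distrib, Finset.mul_sum]
  refine Finset.sum_le_sum fun i _ => ?_
  have hP : (Pfun (v i) - Pfun (v j))⁻ ≤ 6 * (v i)⁻ := by
    rw [negPart_def]
    exact sup_le (by linarith [neg_Pfun_le (v i), Pfun_nonpos hj]) (by positivity)
  have hsmall : 6 * (v i)⁻ ≤ 1 := by
    rcases le_total 0 (v i) with h | h
    · rw [negPart_of_nonneg h]; norm_num
    · rw [negPart_of_nonpos h]; linarith [hv i]
  calc -(c i j * Ds s (Pfun (v i) - Pfun (v j)))
      = c i j * -Ds s (Pfun (v i) - Pfun (v j)) := by ring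
    _ ≤ c i j * (6 * (v i)⁻) :=
      mul_le_mul_of_nonneg_left ((neg_Ds_le_negPart hs (hP.trans hsmall)).trans hP) (hc i j)
    _ = 6 * (c i j * (v i)⁻) := by ring

lemma inflow_pos (hc : ∀ i j, 0 ≤ c i j) {v : ι → ℝ} (hv : ∀ i, 0 ≤ v i) {i j : ι}
    (hj : v j = 0) (hij : 0 < c i j) (hi : 0 < v i) : 0 < inflow s c v j := by
  rw [inflow, hj, Pfun_zero]
  simp only [sub_zero]
  exact Finset.sum_pos' (fun k _ => mul_nonneg (hc k j) (Ds_nonneg (Pfun_nonneg (hv k))))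
    ⟨i, Finset.mem_univ i, mul_pos hij (Ds_pos (Pfun_pos hi))⟩

end Inflow

theorem mem_of_forall_eventually_mem {α X : Type*} [ConditionallyCompleteLinearOrder α]
    [TopologicalSpace α] [OrderTopology α] [DenselyOrdered α] [TopologicalSpace X]
    {f : α → X} {K : Set X} {a : α} (hK : IsClosed K) (hf : ContinuousOn f (Ici a))
    (ha : f a ∈ K) (hstep : ∀ x, a ≤ x → f x ∈ K → ∀ᶠ t in 𝓝[>] x, f t ∈ K)
    {t : α} (ht : a ≤ t) : f t ∈ K := by
  have hclosed : IsClosed (f ⁻¹' K ∩ Icc a t) := by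
    rw [inter_comm]
    exact (hf.mono Icc_subset_Ici_self).preimage_isClosed_of_isClosed isClosed_Icc hK
  exact hclosed.Icc_subset_of_forall_mem_nhdsWithin ha (fun x hx => hstep x hx.2.1 hx.1)
    ⟨ht, le_rfl⟩

lemma eventually_sum_lt {α ι : Type*} {l : Filter α} {s : Finset ι} {g : ι → α → ℝ}
    {m : ι → ℝ} (h : ∀ i ∈ s, ∀ r, m i < r → ∀ᶠ z in l, g i z < r) {r : ℝ}
    (hr : ∑ i ∈ s, m i < r) : ∀ᶠ z in l, ∑ i ∈ s, g i z < r := by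
  classical
  induction s using Finset.induction_on generalizing r with
  | empty => simpa using Eventually.of_forall fun _ => hr
  | insert a s ha ih =>
    rw [Finset.sum_insert ha] at hr
    have hδ : 0 < (r - m a - ∑ i ∈ s, m i) / 2 := by linarith
    filter_upwards [h a (Finset.mem_insert_self a s) _ (lt_add_of_pos_right (m a) hδ),
      ih (fun i hi => h i (Finset.mem_insert_of_mem hi)) (lt_add_of_pos_right _ hδ)]
      with z hza hzs
    rw [Finset.sum_insert ha]
    linarith

lemma eventually_slope_negPart_lt {v : ℝ → ℝ} {d y r : ℝ} (hv : HasDerivWithinAt v d (Ici y) y)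
    (hr : 0 < r) (hd : v y ≤ 0 → -d < r) :
    ∀ᶠ z in 𝓝[>] y, slope (fun t => (v t)⁻) y z < r := by
  rcases lt_or_ge 0 (v y) with hpos | hnonpos
  · have hcont : ContinuousWithinAt v (Ioi y) y := hv.continuousWithinAt.mono Ioi_subset_Ici_self
    filter_upwards [hcont.eventually (lt_mem_nhds hpos)] with z hz
    simpa [slope_def_field, negPart_of_nonneg hz.le, negPart_of_nonneg hpos.le] using hr
  · filter_upwards [hv.neg.Ioi_of_Ici.limsup_slope_le' (lt_irrefl y) (hd hnonpos),
      self_mem_nhdsWithin] with z hslope hz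
    have hzy : 0 < z - y := sub_pos.2 hz
    rw [slope_def_field, div_lt_iff₀ hzy] at hslope ⊢
    simp only [Pi.neg_apply] at hslope
    have hz : (v z)⁻ < (v y)⁻ + r * (z - y) := by
      rw [negPart_def (v z)]
      exact sup_lt_iff.2 ⟨by linarith [neg_le_negPart (v y)],
        by nlinarith [negPart_nonneg (v y)]⟩
    linarith

section Solution

variable {ι : Type*} [Fintype ι]

def IsScavengingSolution (s : ℝ) (c : ι → ι → ℝ) (V : ℝ → ι → ℝ) : Prop :=
  ∀ t ∈ Ici (0 : ℝ), ∀ j, HasDerivWithinAt (fun τ => V τ j) (inflow s c (V t) j) (Ici 0) t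

variable {s : ℝ} {c : ι → ι → ℝ} {V : ℝ → ι → ℝ}

namespace IsScavengingSolution

lemma hasDerivWithinAt_Ici (hV : IsScavengingSolution s c V) {x : ℝ} (hx : 0 ≤ x) (j : ι) :
    HasDerivWithinAt (fun τ => V τ j) (inflow s c (V x) j) (Ici x) x :=
  (hV x hx j).mono (Ici_subset_Ici.2 hx)

lemma continuousOn (hV : IsScavengingSolution s c V) : ContinuousOn V (Ici 0) :=
  continuousOn_pi.2 fun j t ht => (hV t ht j).continuousWithinAt

lemma sum_eq (hV : IsScavengingSolution s c V) (hc : ∀ i j, c i j = c j i) {t : ℝ}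
    (ht : 0 ≤ t) : ∑ j, V t j = ∑ j, V 0 j := by
  refine constant_of_has_deriv_right_zero (f := fun τ => ∑ j, V τ j) ?_ (fun x hx => ?_) t
    ⟨ht, le_rfl⟩
  · exact continuousOn_finsetSum _ fun j _ =>
      (continuousOn_pi.1 hV.continuousOn j).mono Icc_subset_Ici_self
  · have h := HasDerivWithinAt.fun_sum (u := Finset.univ) fun j _ => hV.hasDerivWithinAt_Ici hx.1 j
    rwa [sum_inflow_eq_zero hc] at h

lemma eventually_slope_sum_negPart_lt (hV : IsScavengingSolution s c V) (hs : 1 ≤ s)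
    (hc : ∀ i j, 0 ≤ c i j) {y : ℝ} (hy : 0 ≤ y) (hVy : ∀ i, -1 ≤ 6 * V y i) {r : ℝ}
    (hr : 6 * (∑ j, ∑ i, c i j) * ∑ i, (V y i)⁻ < r) :
    ∀ᶠ z in 𝓝[>] y, slope (fun t => ∑ j, (V t j)⁻) y z < r := by
  set m : ι → ℝ := fun j => 6 * ∑ i, c i j * (V y i)⁻
  have hm_nonneg (j : ι) : 0 ≤ m j :=
    mul_nonneg (by norm_num) (Finset.sum_nonneg fun i _ => mul_nonneg (hc i j) (negPart_nonneg _))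
  have hm_sum : ∑ j, m j ≤ 6 * (∑ j, ∑ i, c i j) * ∑ i, (V y i)⁻ := by
    simp only [m, ← Finset.mul_sum, mul_assoc, Finset.sum_mul]
    gcongr with j _ i _
    · exact hc i j
    · exact Finset.single_le_sum (fun k _ => negPart_nonneg (V y k)) (Finset.mem_univ i)
  have hslopes := eventually_sum_lt (s := Finset.univ) (m := m) (fun j _ r hr =>
    eventually_slope_negPart_lt (hV.hasDerivWithinAt_Ici hy j) ((hm_nonneg j).trans_lt hr)
      fun hj => (neg_inflow_le hs hc hVy hj).trans_lt hr) (hm_sum.trans_lt hr)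
  filter_upwards [hslopes] with z hz
  simpa only [slope_def_field, ← Finset.sum_sub_distrib, Finset.sum_div] using hz

lemma eventually_nonneg_of_one_le (hV : IsScavengingSolution s c V) (hs : 1 ≤ s)
    (hc : ∀ i j, 0 ≤ c i j) {x : ℝ} (hx : 0 ≤ x) (hVx : ∀ j, 0 ≤ V x j) :
    ∀ᶠ t in 𝓝[>] x, ∀ j, 0 ≤ V t j := by
  obtain ⟨b, hxb, hb⟩ : ∃ b ∈ Ioi x, Ico x b ⊆ {t | ∀ j, -1 ≤ 6 * V t j} := by
    rw [← mem_nhdsGE_iff_exists_Ico_subset]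
    refine eventually_all.2 fun j => ?_
    filter_upwards [(hV.hasDerivWithinAt_Ici hx j).continuousWithinAt.eventually_const_lt
      (show -1 / 6 < V x j by linarith [hVx j])] with t ht
    linarith
  set f : ℝ → ℝ := fun t => ∑ j, (V t j)⁻
  have hf : ContinuousOn f (Icc x b) :=
    continuousOn_finsetSum _ fun j _ => ((continuousOn_pi.1 hV.continuousOn j).mono
      fun t ht => hx.trans ht.1).neg.sup continuousOn_const
  have hf_zero : ∀ t ∈ Icc x b, f t ≤ 0 := by
    simpa only [gronwallBound_ε0_δ0] using
      le_gronwallBound_of_liminf_deriv_right_le (δ := 0) (ε := 0)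
        (f' := fun y => 6 * (∑ j, ∑ i, c i j) * f y) hf
        (fun y hy r hr => (hV.eventually_slope_sum_negPart_lt hs hc (hx.trans hy.1) (hb hy)
          hr).frequently)
        (by simp [f, negPart_of_nonneg, hVx]) (fun _ _ => (add_zero _).ge)
  filter_upwards [Ioo_mem_nhdsGT hxb] with t ht j
  refine negPart_eq_zero.1 (le_antisymm ?_ (negPart_nonneg _))
  exact (Finset.single_le_sum (fun k _ => negPart_nonneg (V t k)) (Finset.mem_univ j)).trans
    (hf_zero t (Ioo_subset_Icc_self ht))

lemma eventually_nonneg_of_complete (hV : IsScavengingSolution s c V) (hc : ∀ i j, 0 ≤ c i j)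
    (hcpos : ∀ i j, i ≠ j → 0 < c i j) {x : ℝ} (hx : 0 ≤ x) (hVx : ∀ j, 0 ≤ V x j)
    (htot : 0 < ∑ j, V x j) : ∀ᶠ t in 𝓝[>] x, ∀ j, 0 ≤ V t j := by
  obtain ⟨i, hi⟩ : ∃ i, 0 < V x i := by
    by_contra! h
    exact htot.not_ge (Finset.sum_nonpos fun j _ => h j)
  refine eventually_all.2 fun j => ?_
  have hd := hV.hasDerivWithinAt_Ici hx j
  rcases (hVx j).lt_or_eq with hpos | hzero
  · filter_upwards [(hd.continuousWithinAt.mono Ioi_subset_Ici_self).eventually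
      (lt_mem_nhds hpos)] with t ht
    exact ht.le
  · have hij : i ≠ j := fun h => hi.ne' (h ▸ hzero.symm)
    have hd_pos := inflow_pos (s := s) hc hVx hzero.symm (hcpos i j hij) hi
    filter_upwards [((hasDerivWithinAt_iff_tendsto_slope' (lt_irrefl x)).1
      hd.Ioi_of_Ici).eventually (lt_mem_nhds hd_pos), self_mem_nhdsWithin] with t ht hxt
    rw [slope_def_field, ← hzero, sub_zero] at ht
    exact ((div_pos_iff_of_pos_right (sub_pos.2 hxt)).1 ht).le

end IsScavengingSolution

end Solution

theorem stmt11_general (N : ℕ) (s : ℝ)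
    (c : Fin N → Fin N → ℝ)
    (hsymm : ∀ i j, c i j = c j i)
    (hnonneg : ∀ i j, 0 ≤ c i j)
    (hcase : 1 ≤ s ∨ ∀ i j, i ≠ j → 0 < c i j)
    (Vbar : ℝ) (hVbar : 0 < Vbar)
    (V : ℝ → Fin N → ℝ)
    (hsol : ∀ t ∈ Set.Ici (0 : ℝ), ∀ j, HasDerivWithinAt (fun τ => V τ j)
      (∑ i, c i j * Ds s (Pfun (V t i) - Pfun (V t j))) (Set.Ici (0 : ℝ)) t)
    (hinit : ∀ j, 0 ≤ V 0 j)
    (hmean : (1 / (N : ℝ)) * ∑ j, V 0 j = Vbar) :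
    ∀ t ∈ Set.Ici (0 : ℝ), ∀ j, 0 ≤ V t j := by
  have hV : IsScavengingSolution s c V := hsol
  have hstep : ∀ x, 0 ≤ x → (∀ j, 0 ≤ V x j) → ∀ᶠ t in 𝓝[>] x, ∀ j, 0 ≤ V t j := by
    rcases hcase with hs | hcomplete
    · exact fun x hx => hV.eventually_nonneg_of_one_le hs hnonneg hx
    · have htot : 0 < ∑ j, V 0 j := pos_of_mul_pos_right (hmean ▸ hVbar) (by positivity)
      exact fun x hx hVx => hV.eventually_nonneg_of_complete hnonneg hcomplete hx hVx
        (hV.sum_eq hsymm hx ▸ htot)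
  exact fun t ht => mem_of_forall_eventually_mem (K := Ici 0) isClosed_Ici
    hV.continuousOn hinit hstep ht

theorem stmt11 (N : ℕ) (hN : 2 ≤ N) (s : ℝ) (hs : 0 < s)
    (c : Fin N → Fin N → ℝ)
    (hsymm : ∀ i j, c i j = c j i)
    (hnonneg : ∀ i j, 0 ≤ c i j)
    (hdiag : ∀ i, c i i = 0)
    (hconn : (SimpleGraph.fromRel (fun i j => 0 < c i j)).Connected)
    (hcase : 1 ≤ s ∨ ∀ i j, i ≠ j → 0 < c i j)
    (Vbar : ℝ) (hVbar : 0 < Vbar)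
    (V : ℝ → Fin N → ℝ)
    (hsol : ∀ t ∈ Set.Ici (0 : ℝ), ∀ j, HasDerivWithinAt (fun τ => V τ j)
      (∑ i, c i j * Ds s (Pfun (V t i) - Pfun (V t j))) (Set.Ici (0 : ℝ)) t)
    (hinit : ∀ j, 0 ≤ V 0 j)
    (hmean : (1 / (N : ℝ)) * ∑ j, V 0 j = Vbar) :
    ∀ t ∈ Set.Ici (0 : ℝ), ∀ j, 0 ≤ V t j :=
  stmt11_general N s c hsymm hnonneg hcase Vbar hVbar V hsol hinit hmean
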